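/- If a system C = (1, c₂, ..., cₙ) with n ≥ 3 is noncanonical and w is its minimum counterexample, then c₃ + 1 < w < c_{n-1} + cₙ. -/

import Mathlib

open Finset

/-- `x` is a representation of value `v` in the coin system `c 1, …, c n`. -/
def IsRepr (n : ℕ) (c : ℕ → ℕ) (v : ℕ) (x : ℕ → ℕ) : Prop :=
  ∑ i ∈ Finset.Icc 1 n, c i * x i = v

/-- Minimum number of coins over all representations of `v`. -/
noncomputable def opt (n : ℕ) (c : ℕ → ℕ) (v : ℕ) : ℕ :=
  sInf {k | ∃ x : ℕ → ℕ, IsRepr n c v x ∧ ∑ i ∈ Finset.Icc 1 n, x i = k}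

/-- Number of coins used by the greedy algorithm to pay `v`. -/
def grd (n : ℕ) (c : ℕ → ℕ) (v : ℕ) : ℕ :=
  if hv : v = 0 then 0
  else
    let m := ((Finset.Icc 1 n).filter (fun i => c i ≤ v)).sup c
    if hm : 0 < m then grd n c (v - m) + 1 else 0
termination_by v
decreasing_by omega

/-- The system is canonical: greedy is optimal for every positive value. -/
def Canonical (n : ℕ) (c : ℕ → ℕ) : Prop :=
  ∀ v, 0 < v → opt n c v = grd n c v

/-- `w` is a counterexample to the system. -/
def IsCex (n : ℕ) (c : ℕ → ℕ) (w : ℕ) : Prop :=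
  0 < w ∧ opt n c w < grd n c w

/-- `w` is the minimum counterexample to the system. -/
def MinCex (n : ℕ) (c : ℕ → ℕ) (w : ℕ) : Prop :=
  IsCex n c w ∧ ∀ u, IsCex n c u → w ≤ u

/-- A (currency) system: first coin is `1` and coins strictly increase. -/
def IsSystem (n : ℕ) (c : ℕ → ℕ) : Prop :=
  c 1 = 1 ∧ StrictMonoOn c (Set.Icc 1 n)

/-! Let `w` be the minimum counterexample and `c g` the coin greedy pays first. An optimal
representation of `w` cannot use `c g`, for then `w - c g` would be a smaller counterexample.
Hence `g ≥ 3` (otherwise only the coin `1` is left), and greedy is optimal whenever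
`w - c g ≤ 1`, so `w ≥ c 3 + 2`. If `w ≥ c (n - 1) + c n`, greedy starts with `c n` both on
`w` and on `w - c j` for any coin `c j` of the optimal representation; paying `c n` and `c j`
in either order and using minimality on the smaller values gives `grd w ≤ opt w`. -/

def IsGreedyIndex (n : ℕ) (c : ℕ → ℕ) (v j : ℕ) : Prop :=
  j ∈ Icc 1 n ∧ c j ≤ v ∧ ∀ i ∈ Icc 1 n, c i ≤ v → c i ≤ c j

variable {n : ℕ} {c : ℕ → ℕ}

lemma IsSystem.coin_pos (hsys : IsSystem n c) {i : ℕ} (hi : i ∈ Icc 1 n) : 0 < c i := by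
  obtain ⟨h1, hm⟩ := hsys
  have h1i : c 1 ≤ c i := hm.monotoneOn ⟨le_rfl, (mem_Icc.1 hi).1.trans (mem_Icc.1 hi).2⟩
    (mem_Icc.1 hi) (mem_Icc.1 hi).1
  omega

lemma isGreedyIndex_coin {j : ℕ} (hj : j ∈ Icc 1 n) : IsGreedyIndex n c (c j) j :=
  ⟨hj, le_rfl, fun _ _ h => h⟩

lemma isGreedyIndex_last (hm : StrictMonoOn c (Set.Icc 1 n)) (hn : 1 ≤ n) {v : ℕ}
    (hv : c n ≤ v) : IsGreedyIndex n c v n :=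
  ⟨mem_Icc.2 ⟨hn, le_rfl⟩, hv, fun _ hi _ =>
    hm.monotoneOn (mem_Icc.1 hi) ⟨hn, le_rfl⟩ (mem_Icc.1 hi).2⟩

lemma exists_isGreedyIndex (h1 : c 1 = 1) (hn : 1 ≤ n) {v : ℕ} (hv : 0 < v) :
    ∃ j, IsGreedyIndex n c v j := by
  have hne : ((Icc 1 n).filter (c · ≤ v)).Nonempty := ⟨1, by simp [hn, h1]; omega⟩
  obtain ⟨j, hj, hsup⟩ := exists_mem_eq_sup _ hne c
  rw [mem_filter] at hj
  exact ⟨j, hj.1, hj.2, fun i hi hiv => hsup ▸ le_sup (mem_filter.2 ⟨hi, hiv⟩)⟩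

lemma sum_mul_add_single {ι R : Type*} [DecidableEq ι] [NonAssocSemiring R] (s : Finset ι)
    (f y : ι → R) {j : ι} (hj : j ∈ s) :
    ∑ i ∈ s, f i * (y + Pi.single j 1 : ι → R) i = ∑ i ∈ s, f i * y i + f j := by
  simp [mul_add, sum_add_distrib, Pi.single_apply, hj]

lemma sum_add_single {ι R : Type*} [DecidableEq ι] [AddCommMonoid R] [One R] (s : Finset ι)
    (y : ι → R) {j : ι} (hj : j ∈ s) :
    ∑ i ∈ s, (y + Pi.single j 1 : ι → R) i = ∑ i ∈ s, y i + 1 := by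
  simp [sum_add_distrib, hj]

lemma IsRepr.add_single {v j : ℕ} {y : ℕ → ℕ} (hy : IsRepr n c v y) (hj : j ∈ Icc 1 n) :
    IsRepr n c (v + c j) (y + Pi.single j 1) := by
  rw [IsRepr, sum_mul_add_single _ _ _ hj, hy]

lemma IsRepr.mul_le {v i : ℕ} {x : ℕ → ℕ} (hx : IsRepr n c v x) (hi : i ∈ Icc 1 n) :
    c i * x i ≤ v :=
  hx ▸ single_le_sum (f := fun i => c i * x i) (fun _ _ => Nat.zero_le _) hi

lemma IsRepr.coin_le {v i : ℕ} {x : ℕ → ℕ} (hx : IsRepr n c v x) (hi : i ∈ Icc 1 n)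
    (hxi : 0 < x i) : c i ≤ v :=
  (Nat.le_mul_of_pos_right _ hxi).trans (hx.mul_le hi)

lemma opt_le_sum {v : ℕ} {x : ℕ → ℕ} (hx : IsRepr n c v x) :
    opt n c v ≤ ∑ i ∈ Icc 1 n, x i :=
  Nat.sInf_le ⟨x, hx, rfl⟩

lemma opt_zero : opt n c 0 = 0 := by
  have hzero : IsRepr n c 0 0 := by simp [IsRepr]
  simpa using opt_le_sum hzero

lemma exists_optimal_repr (h1 : c 1 = 1) (hn : 1 ≤ n) (v : ℕ) :
    ∃ x, IsRepr n c v x ∧ ∑ i ∈ Icc 1 n, x i = opt n c v := by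
  have hv : IsRepr n c v (Pi.single 1 v) := by
    simp [IsRepr, Pi.single_apply, hn, h1]
  exact Nat.sInf_mem (s := {k | ∃ x, IsRepr n c v x ∧ ∑ i ∈ Icc 1 n, x i = k})
    ⟨_, _, hv, rfl⟩

lemma opt_add_coin_le (h1 : c 1 = 1) (hn : 1 ≤ n) {j : ℕ} (hj : j ∈ Icc 1 n) (v : ℕ) :
    opt n c (v + c j) ≤ opt n c v + 1 := by
  obtain ⟨y, hy, hyopt⟩ := exists_optimal_repr h1 hn v
  have := opt_le_sum (hy.add_single hj)
  rwa [sum_add_single _ _ hj, hyopt] at this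

lemma opt_sub_coin_add_one_le {v j : ℕ} {x : ℕ → ℕ} (hx : IsRepr n c v x)
    (hj : j ∈ Icc 1 n) (hxj : 0 < x j) :
    opt n c (v - c j) + 1 ≤ ∑ i ∈ Icc 1 n, x i := by
  set y : ℕ → ℕ := x - Pi.single j 1
  have hxy : x = y + Pi.single j 1 := by
    ext i; by_cases hij : i = j <;> simp [y, hij]; omega
  have hy : IsRepr n c (∑ i ∈ Icc 1 n, c i * y i) y := rfl
  have hv : v - c j = ∑ i ∈ Icc 1 n, c i * y i := by
    have := hy.add_single hj
    rw [← hxy] at this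
    unfold IsRepr at this hx
    omega
  rw [hv, hxy, sum_add_single _ _ hj]
  exact Nat.add_le_add_right (opt_le_sum hy) 1

lemma eq_zero_of_opt_eq_zero (h1 : c 1 = 1) (hn : 1 ≤ n) {v : ℕ} (h : opt n c v = 0) :
    v = 0 := by
  obtain ⟨x, hx, hxopt⟩ := exists_optimal_repr h1 hn v
  rw [h, sum_eq_zero_iff] at hxopt
  rw [← hx]
  exact sum_eq_zero fun i hi => by rw [hxopt i hi, mul_zero]

lemma exists_coin_eq_of_opt_eq_one (h1 : c 1 = 1) (hn : 1 ≤ n) {v : ℕ} (h : opt n c v = 1) :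
    ∃ i ∈ Icc 1 n, c i = v := by
  obtain ⟨x, hx, hxopt⟩ := exists_optimal_repr h1 hn v
  obtain ⟨i, hi, hxi⟩ := exists_ne_zero_of_sum_ne_zero (s := Icc 1 n) (f := x) (by omega)
  have hrest := opt_sub_coin_add_one_le hx hi (Nat.pos_of_ne_zero hxi)
  have hvi := eq_zero_of_opt_eq_zero h1 hn (v := v - c i) (by omega)
  exact ⟨i, hi, by have := hx.coin_le hi (Nat.pos_of_ne_zero hxi); omega⟩

lemma grd_zero : grd n c 0 = 0 := by
  rw [grd, dif_pos rfl]

lemma grd_le_self (v : ℕ) : grd n c v ≤ v := by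
  induction v using Nat.strong_induction_on with
  | _ v ih =>
    rw [grd]
    split_ifs with hv
    · exact Nat.zero_le _
    · dsimp only
      split_ifs with hm
      · have hle : ((Icc 1 n).filter (fun i => c i ≤ v)).sup c ≤ v :=
          Finset.sup_le fun i hi => (mem_filter.1 hi).2
        have := ih _ (Nat.sub_lt (Nat.pos_of_ne_zero hv) hm)
        omega
      · exact Nat.zero_le _

lemma IsGreedyIndex.grd_eq {v j : ℕ} (hj : IsGreedyIndex n c v j) (hpos : 0 < c j) :
    grd n c v = grd n c (v - c j) + 1 := by
  obtain ⟨hjn, hjv, hmax⟩ := hj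
  have hsup : ((Icc 1 n).filter (c · ≤ v)).sup c = c j :=
    le_antisymm (Finset.sup_le fun i hi => hmax i (mem_filter.1 hi).1 (mem_filter.1 hi).2)
      (le_sup (mem_filter.2 ⟨hjn, hjv⟩))
  rw [grd, dif_neg (by omega)]
  simp only [hsup]
  rw [dif_pos hpos]

lemma grd_coin (hsys : IsSystem n c) {j : ℕ} (hj : j ∈ Icc 1 n) : grd n c (c j) = 1 := by
  rw [(isGreedyIndex_coin hj).grd_eq (hsys.coin_pos hj), Nat.sub_self, grd_zero]

lemma opt_le_grd (hsys : IsSystem n c) (hn : 1 ≤ n) (v : ℕ) : opt n c v ≤ grd n c v := by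
  induction v using Nat.strong_induction_on with
  | _ v ih =>
    rcases Nat.eq_zero_or_pos v with rfl | hv
    · rw [opt_zero, grd_zero]
    obtain ⟨j, hj⟩ := exists_isGreedyIndex hsys.1 hn hv
    have hpos := hsys.coin_pos hj.1
    have hadd := opt_add_coin_le hsys.1 hn hj.1 (v - c j)
    rw [Nat.sub_add_cancel hj.2.1] at hadd
    have := ih (v - c j) (by omega)
    rw [hj.grd_eq hpos]
    omega

lemma grd_le_opt_of_sub_le_one (hsys : IsSystem n c) (hn : 1 ≤ n) {v g : ℕ} (hv : 0 < v)
    (hg : IsGreedyIndex n c v g) (hsub : v - c g ≤ 1) : grd n c v ≤ opt n c v := by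
  have hone : 1 ≤ opt n c v :=
    Nat.one_le_iff_ne_zero.2 fun h => hv.ne' (eq_zero_of_opt_eq_zero hsys.1 hn h)
  rw [hg.grd_eq (hsys.coin_pos hg.1)]
  rcases Nat.le_one_iff_eq_zero_or_eq_one.1 hsub with hzero | hone'
  · rw [hzero, grd_zero]
    exact hone
  · have hgrd1 := grd_coin hsys (mem_Icc.2 ⟨le_rfl, hn⟩)
    rw [hsys.1] at hgrd1
    rw [hone', hgrd1]
    by_contra hlt
    obtain ⟨i, hi, hci⟩ := exists_coin_eq_of_opt_eq_one hsys.1 hn (v := v) (by omega)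
    have := hg.2.2 i hi hci.le
    omega

section Exchange

variable {v : ℕ} {x : ℕ → ℕ}

lemma grd_le_opt_of_optimal_uses_greedy (hbelow : ∀ u < v, grd n c u ≤ opt n c u)
    (hx : IsRepr n c v x) (hxopt : ∑ i ∈ Icc 1 n, x i = opt n c v) {g : ℕ}
    (hg : IsGreedyIndex n c v g) (hgpos : 0 < c g) (hxg : 0 < x g) :
    grd n c v ≤ opt n c v := by
  have hrest := opt_sub_coin_add_one_le hx hg.1 hxg
  have := hbelow (v - c g) (by have := hg.2.1; omega)
  rw [hg.grd_eq hgpos]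
  omega

lemma grd_le_opt_of_isGreedyIndex_sub_coin (hsys : IsSystem n c) (hn : 1 ≤ n)
    (hbelow : ∀ u < v, grd n c u ≤ opt n c u)
    (hx : IsRepr n c v x) (hxopt : ∑ i ∈ Icc 1 n, x i = opt n c v) {j g : ℕ}
    (hj : j ∈ Icc 1 n) (hxj : 0 < x j)
    (hg : IsGreedyIndex n c v g) (hg' : IsGreedyIndex n c (v - c j) g) :
    grd n c v ≤ opt n c v := by
  have hcj := hsys.coin_pos hj
  have hcg := hsys.coin_pos hg.1
  have hjv := hx.coin_le hj hxj
  have hgj := hg'.2.1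
  calc grd n c v = grd n c (v - c g) + 1 := hg.grd_eq hcg
    _ ≤ opt n c (v - c g) + 1 := by gcongr; exact hbelow _ (by omega)
    _ ≤ opt n c (v - c j - c g) + 1 + 1 := by
      gcongr
      have := opt_add_coin_le hsys.1 hn hj (v - c j - c g)
      rwa [show v - c j - c g + c j = v - c g by omega] at this
    _ ≤ grd n c (v - c j - c g) + 1 + 1 := by gcongr; exact opt_le_grd hsys hn _
    _ = grd n c (v - c j) + 1 := by rw [hg'.grd_eq hcg]
    _ ≤ opt n c (v - c j) + 1 := by gcongr; exact hbelow _ (by omega)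
    _ ≤ opt n c v := hxopt ▸ opt_sub_coin_add_one_le hx hj hxj

end Exchange

namespace MinCex

variable {w : ℕ}

lemma grd_le_opt_of_lt (hw : MinCex n c w) {u : ℕ} (hu : u < w) : grd n c u ≤ opt n c u := by
  rcases Nat.eq_zero_or_pos u with rfl | hu0
  · rw [grd_zero]
    exact Nat.zero_le _
  by_contra h
  have := hw.2 u ⟨hu0, by omega⟩
  omega

lemma lt_of_isGreedyIndex (hsys : IsSystem n c) (hw : MinCex n c w) {x : ℕ → ℕ}
    (hx : IsRepr n c w x) (hxopt : ∑ i ∈ Icc 1 n, x i = opt n c w) {g i : ℕ}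
    (hg : IsGreedyIndex n c w g) (hi : i ∈ Icc 1 n) (hxi : 0 < x i) : i < g := by
  have hxg : x g = 0 := by
    by_contra h
    exact (grd_le_opt_of_optimal_uses_greedy (fun _ => hw.grd_le_opt_of_lt) hx hxopt hg
      (hsys.coin_pos hg.1) (by omega)).not_gt hw.1.2
  have hig : c i ≤ c g := hg.2.2 i hi (hx.coin_le hi hxi)
  by_contra hgi
  rcases (not_lt.1 hgi).eq_or_lt with rfl | hlt
  · omega
  · exact (hsys.2 (mem_Icc.1 hg.1) (mem_Icc.1 hi) hlt).not_ge hig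

lemma three_le_of_isGreedyIndex (hsys : IsSystem n c) (hw : MinCex n c w) {g : ℕ}
    (hg : IsGreedyIndex n c w g) : 3 ≤ g := by
  by_contra hg3
  obtain ⟨hg1, hgn⟩ := mem_Icc.1 hg.1
  obtain ⟨x, hx, hxopt⟩ := exists_optimal_repr hsys.1 (hg1.trans hgn) w
  have hcount : ∑ i ∈ Icc 1 n, c i * x i = ∑ i ∈ Icc 1 n, x i := by
    refine sum_congr rfl fun i hi => ?_
    rcases Nat.eq_zero_or_pos (x i) with h | h
    · rw [h, mul_zero]
    · have := hw.lt_of_isGreedyIndex hsys hx hxopt hg hi h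
      rw [show i = 1 by have := (mem_Icc.1 hi).1; omega, hsys.1, one_mul]
  have hopt : opt n c w = w := by rw [← hxopt, ← hcount, hx]
  have := grd_le_self (n := n) (c := c) w
  have := hw.1.2
  omega

lemma coin_three_add_one_lt (hsys : IsSystem n c) (hn : 1 ≤ n) (hw : MinCex n c w) :
    c 3 + 1 < w := by
  obtain ⟨g, hg⟩ := exists_isGreedyIndex hsys.1 hn hw.1.1
  have h3 := hw.three_le_of_isGreedyIndex hsys hg
  have hc3 : c 3 ≤ c g :=
    hsys.2.monotoneOn ⟨by omega, h3.trans (mem_Icc.1 hg.1).2⟩ (mem_Icc.1 hg.1) h3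
  have hrem : 1 < w - c g := by
    by_contra h
    exact (grd_le_opt_of_sub_le_one hsys hn hw.1.1 hg (by omega)).not_gt hw.1.2
  omega

lemma lt_coin_pred_add_coin (hsys : IsSystem n c) (hn : 1 ≤ n) (hw : MinCex n c w) :
    w < c (n - 1) + c n := by
  by_contra hge
  obtain ⟨x, hx, hxopt⟩ := exists_optimal_repr hsys.1 hn w
  have hsum : ∑ i ∈ Icc 1 n, c i * x i ≠ 0 := by
    unfold IsRepr at hx
    have := hw.1.1
    omega
  obtain ⟨j, hj, hcxj⟩ := exists_ne_zero_of_sum_ne_zero hsum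
  have hxj : 0 < x j := Nat.pos_of_ne_zero (right_ne_zero_of_mul hcxj)
  have hg : IsGreedyIndex n c w n := isGreedyIndex_last hsys.2 hn (by omega)
  have hjn := hw.lt_of_isGreedyIndex hsys hx hxopt hg hj hxj
  have hcj : c j ≤ c (n - 1) :=
    hsys.2.monotoneOn (mem_Icc.1 hj) ⟨(mem_Icc.1 hj).1.trans (by omega), by omega⟩ (by omega)
  have hg' : IsGreedyIndex n c (w - c j) n := isGreedyIndex_last hsys.2 hn (by omega)
  exact (grd_le_opt_of_isGreedyIndex_sub_coin hsys hn (fun _ => hw.grd_le_opt_of_lt) hx hxopt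
    hj hxj hg hg').not_gt hw.1.2

end MinCex

theorem min_counterexample_bounds_general (n : ℕ) (c : ℕ → ℕ) (hn : 3 ≤ n)
    (hsys : IsSystem n c) (w : ℕ) (hw : MinCex n c w) :
    c 3 + 1 < w ∧ w < c (n - 1) + c n :=
  ⟨hw.coin_three_add_one_lt hsys (by omega), hw.lt_coin_pred_add_coin hsys (by omega)⟩

/-- Bounds on the minimum counterexample (Kozen and Zaks). -/
theorem min_counterexample_bounds (n : ℕ) (c : ℕ → ℕ) (hn : 3 ≤ n)
    (hsys : IsSystem n c) (hnc : ¬ Canonical n c) (w : ℕ) (hw : MinCex n c w) :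
    c 3 + 1 < w ∧ w < c (n - 1) + c n :=
  min_counterexample_bounds_general n c hn hsys w hw
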